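/- arXiv:2603.19717 — 4 statements merged into one kernel-verified Lean document; each statement's English description precedes it below -/
import Mathlib

section
/- Let (M, F₀, P) be a probability space and F ⊆ F' ⊆ F₀ sub-σ-algebras, and let A ∈ F₀. Suppose the conditional probability P(A | F') takes values in {0,1} P-almost surely, and that it admits an F-measurable version (i.e., there is an F-measurable g : M → ℝ with g = P(A | F') P-almost surely). Then there exists B ∈ F with P(A Δ B) = 0, i.e., A lies in the null-event-augmentation of F. -/
open MeasureTheory

namespace CMTPaper

/-- If the conditional probability `P(A | F')` is `{0,1}`-valued a.s. and
admits an `F`-measurable version (`F ⊆ F' ⊆ F₀`), then `A` lies in the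
null-event-augmentation of `F`. -/
theorem condexp_zero_one_implies_augmented
    {M : Type*} (F F' : MeasurableSpace M) [m0 : MeasurableSpace M] (P : Measure M) [IsProbabilityMeasure P]
    (hFF' : F ≤ F') (hF'm0 : F' ≤ m0)
    (A : Set M) (hA : MeasurableSet A)
    (h01 : ∀ᵐ x ∂P, (P[A.indicator (fun _ => (1 : ℝ))|F']) x = 0 ∨
      (P[A.indicator (fun _ => (1 : ℝ))|F']) x = 1)
    (hver : ∃ g : M → ℝ, Measurable[F] g ∧
      g =ᵐ[P] P[A.indicator (fun _ => (1 : ℝ))|F']) :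
    ∃ B : Set M, MeasurableSet[F] B ∧ P (symmDiff A B) = 0 := by
  classical
  letI : MeasurableSpace M := m0
  obtain ⟨g, hg, hgf⟩ := hver
  set f := P[A.indicator (fun _ => (1 : ℝ))|F'] with hfdef
  refine ⟨g ⁻¹' {1}, hg (measurableSet_singleton 1), ?_⟩
  set B := g ⁻¹' {1} with hBdef
  have hB : MeasurableSet[F] B := hg (measurableSet_singleton 1)
  have hB' : MeasurableSet[F'] B := hFF' _ hB
  have hBm0 : MeasurableSet[m0] B := hF'm0 _ hB'
  have hAm0 : MeasurableSet[m0] A := hA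
  have hfint : Integrable (A.indicator (fun _ => (1 : ℝ))) P :=
    (integrable_const (1 : ℝ)).indicator hAm0
  -- f = 1 a.e. on B
  have hfB : ∀ᵐ x ∂(P.restrict B), f x = 1 := by
    filter_upwards [ae_restrict_of_ae hgf, ae_restrict_mem hBm0] with x hx hxB
    rw [← hx]; exact hxB
  -- f = 0 a.e. on Bᶜ
  have hfBc : ∀ᵐ x ∂(P.restrict Bᶜ), f x = 0 := by
    filter_upwards [ae_restrict_of_ae hgf, ae_restrict_of_ae h01,
      ae_restrict_mem hBm0.compl] with x hx h01x hxB
    rcases h01x with h | h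
    · exact h
    · exact absurd (hx.trans h) hxB
  have hIB : ∫ x in B, A.indicator (fun _ => (1 : ℝ)) x ∂P = ∫ x in B, f x ∂P :=
    (setIntegral_condExp hF'm0 hfint hB').symm
  have hIBc : ∫ x in Bᶜ, A.indicator (fun _ => (1 : ℝ)) x ∂P = ∫ x in Bᶜ, f x ∂P :=
    (setIntegral_condExp hF'm0 hfint hB'.compl).symm
  have hind : ∀ s : Set M, ∫ x in s, A.indicator (fun _ => (1 : ℝ)) x ∂P
      = (P (A ∩ s)).toReal := by
    intro s
    rw [setIntegral_indicator hAm0, Set.inter_comm, setIntegral_const, smul_eq_mul, mul_one, measureReal_def]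
  -- P (A \ B) = 0
  have hABc : P (A \ B) = 0 := by
    have : (P (A ∩ Bᶜ)).toReal = 0 := by
      rw [← hind Bᶜ, hIBc, integral_congr_ae hfBc, integral_zero]
    rw [Set.diff_eq]
    exact (ENNReal.toReal_eq_zero_iff _).mp this |>.resolve_right (measure_ne_top P _)
  -- P (A ∩ B) = P B
  have hAB : P (A ∩ B) = P B := by
    have h1 : (P (A ∩ B)).toReal = (P B).toReal := by
      rw [← hind B, hIB, integral_congr_ae hfB, setIntegral_const, smul_eq_mul, mul_one, measureReal_def]
    exact (ENNReal.toReal_eq_toReal_iff' (measure_ne_top P _) (measure_ne_top P _)).mp h1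
  -- P (B \ A) = 0
  have hBA : P (B \ A) = 0 := by
    have h2 : P (B ∩ A) + P (B \ A) = P B := measure_inter_add_diff B hAm0
    rw [Set.inter_comm, hAB] at h2
    have h3 : P B + P (B \ A) = P B + 0 := by rw [add_zero]; exact h2
    exact (ENNReal.add_right_inj (measure_ne_top P B)).mp h3
  rw [Set.symmDiff_def]
  exact measure_union_null hABc hBA

end CMTPaper
end

section
/- Let K be a cycle-free Markov kernel on a countable set G. For x, y ∈ G, let p(x,y) be the probability, under the joint law ℙ_x ⊗ ℙ_y of two independent Markov chains with kernel K started from x and y, that the two paths have no collision. Then p(x,y) ≥ p(x,x)/3 for all x, y ∈ G. -/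
/-!
Run three independent chains: `q` and `p` from `x`, and `r` from `y`. It suffices to show
`P(q, p do not collide) ≤ P(p, r do not collide) + P(q, r do not collide)`, i.e.
`p(x,x) ≤ 2 p(x,y)`. If `q, p` do not collide but `r` collides with both, let `n` be the first
time at which `r` meets the trace of `p` or `q`, say `r n = p m` with `m` minimal. Exchanging the
tails of `p` and `r` after times `m` and `n` preserves the joint law (Markov property) and gives a
configuration in which `q` collides with the new `p` but not with the new `r`, and whose first
meeting is still `(m, n)`. So the images of the pieces indexed by `(m, n)` are disjoint, and the
event costs at most `P(q, p collide, q, r do not)`; a first meeting with `q` is symmetric.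
Cycle-freeness makes `r` injective almost surely, which is what keeps the first meeting in place.
-/

open MeasureTheory

namespace CMTPaper

variable {G : Type*}

/-- The `n`-step kernel of a Markov kernel `K` on a countable set `G`:
`K^0(x,·) = δ_x` and `K^{n+1}(x,A) = Σ_y K(x,{y})·K^n(y,A)`. -/
noncomputable def nStep [MeasurableSpace G] (K : G → Measure G) : ℕ → G → Measure G
  | 0 => fun x => Measure.dirac x
  | n + 1 => fun x => Measure.sum fun y => K x {y} • nStep K n y

/-- A kernel is cycle-free if `K^m(x,{x}) = 0` for every `x` and every `m ≥ 1`. -/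
def CycleFree [MeasurableSpace G] (K : G → Measure G) : Prop :=
  ∀ x : G, ∀ m : ℕ, 1 ≤ m → nStep K m x {x} = 0

/-- `P` is the law on path space `G^ℕ` of the Markov chain with kernel `K` started at `x`
(characterized by its finite-dimensional cylinder probabilities). -/
def IsPathLaw [MeasurableSpace G] (K : G → Measure G) (x : G) (P : Measure (ℕ → G)) : Prop :=
  ∀ (n : ℕ) (u : ℕ → G), u 0 = x →
    P {ω | ∀ i ≤ n, ω i = u i} = ∏ i ∈ Finset.range n, K (u i) {u (i + 1)}

/-- The set of collisions of two paths: pairs `(m,n)` with `m,n ≥ 1` and `ω m = ω' n`. -/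
def collisions (ω ω' : ℕ → G) : Set (ℕ × ℕ) :=
  {p : ℕ × ℕ | 1 ≤ p.1 ∧ 1 ≤ p.2 ∧ ω p.1 = ω' p.2}

/-- `μ` is the law on `G^G` of the coalescing Markov trajectories (CMT) with kernel `K`,
i.e. the product measure `⊗_x K(x,·)` (characterized on cylinders). -/
def IsCMTLaw [MeasurableSpace G] (K : G → Measure G) (μ : Measure (G → G)) : Prop :=
  ∀ (s : Finset G) (u : G → G), μ {f | ∀ x ∈ s, f x = u x} = ∏ x ∈ s, K x {u x}

/-- Adjacency in the graph of `f`: an edge between `x` and `f x` for every `x`. -/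
def Adj (f : G → G) (a b : G) : Prop := f a = b ∨ f b = a

/-- `a` and `b` lie in the same connected component of the graph of `f`. -/
def SameComponent (f : G → G) (a b : G) : Prop := Relation.ReflTransGen (Adj f) a b

/-- The connected component of `v` in the graph of `f`. -/
def component (f : G → G) (v : G) : Set G := {u | SameComponent f u v}

/-- The level set of `v`: points whose forward orbit merges with that of `v` after the same
number of steps. -/
def levelSet (f : G → G) (v : G) : Set G := {w | ∃ n : ℕ, f^[n] w = f^[n] v}

/-- The ancestor-line map `π (v, f) = (f^{(n)}(v))_{n ≥ 0}`. -/
def ancLine : G × (G → G) → ℕ → G := fun p n => p.2^[n] p.1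

open scoped ENNReal

section PathCylinder

variable {X : Type*}

def pathCylinder (N : ℕ) (u : ℕ → X) : Set (ℕ → X) := {ω | ∀ i ≤ N, ω i = u i}

def pathDrop (n : ℕ) (u : ℕ → X) : ℕ → X := fun k => u (n + k)

lemma pathCylinder_zero (b : X) : pathCylinder 0 (fun _ => b) = {ω | ω 0 = b} := by
  ext ω
  simp [pathCylinder]

lemma mem_pathCylinder_add_iff {m k : ℕ} {u ω : ℕ → X} :
    ω ∈ pathCylinder (m + k) u ↔
      ω ∈ pathCylinder m u ∧ pathDrop m ω ∈ pathCylinder k (pathDrop m u) := by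
  simp only [pathCylinder, pathDrop, Set.mem_ofPred_eq]
  refine ⟨fun h => ⟨fun i hi => h i (by omega), fun j hj => h _ (by omega)⟩,
    fun ⟨h₁, h₂⟩ i hi => ?_⟩
  rcases le_or_gt i m with him | him
  · exact h₁ i him
  · simpa [show m + (i - m) = i by omega] using h₂ (i - m) (by omega)

lemma mem_pathCylinder_iff_of_le {m N : ℕ} {u ω : ℕ → X} (h : m ≤ N) :
    ω ∈ pathCylinder N u ↔
      ω ∈ pathCylinder m u ∧ pathDrop m ω ∈ pathCylinder (N - m) (pathDrop m u) := by
  rw [← mem_pathCylinder_add_iff, Nat.add_sub_cancel' h]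

variable [MeasurableSpace X]

lemma measurable_pathDrop (n : ℕ) : Measurable (pathDrop (X := X) n) :=
  measurable_pi_lambda _ fun _ => measurable_pi_apply _

variable [MeasurableSingletonClass X]

lemma measurableSet_pathCylinder (N : ℕ) (u : ℕ → X) : MeasurableSet (pathCylinder N u) :=
  measurableSet_setOfPred.2 (by fun_prop)

variable [Countable X]

lemma map_restrict_Iic_eq {μ ν : Measure (ℕ → X)} {N : ℕ}
    (h : ∀ u, μ (pathCylinder N u) = ν (pathCylinder N u)) :
    μ.map ((Finset.Iic N).restrict (π := fun _ => X)) =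
      ν.map ((Finset.Iic N).restrict (π := fun _ => X)) := by
  refine Measure.ext_of_singleton fun v => ?_
  rw [Measure.map_apply (Finset.measurable_restrict _) (measurableSet_singleton v),
    Measure.map_apply (Finset.measurable_restrict _) (measurableSet_singleton v)]
  rcases ((Finset.Iic N).restrict (π := fun _ => X) ⁻¹' {v}).eq_empty_or_nonempty
    with he | ⟨ω, hω⟩
  · simp [he]
  · have : (Finset.Iic N).restrict (π := fun _ => X) ⁻¹' {v} = pathCylinder N ω := by
      ext ω'
      simp only [Set.mem_preimage, Set.mem_singleton_iff] at hω ⊢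
      simp only [← hω, funext_iff, Finset.restrict, Subtype.forall, Finset.mem_Iic,
        pathCylinder, Set.mem_ofPred_eq]
    rw [this, h ω]

theorem ext_of_pathCylinder {μ ν : Measure (ℕ → X)} [IsFiniteMeasure μ] (L : ℕ)
    (h : ∀ N ≥ L, ∀ u, μ (pathCylinder N u) = ν (pathCylinder N u)) : μ = ν := by
  have hcyl : ∀ a (S : Set (Finset.Iic a → X)), MeasurableSet S →
      μ (cylinder (Finset.Iic a) S) = ν (cylinder (Finset.Iic a) S) := by
    intro a S hS
    have hsub : Finset.Iic a ⊆ Finset.Iic (max a L) := Finset.Iic_subset_Iic.2 (le_max_left _ _)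
    have hS' := Finset.measurable_restrict₂ (X := fun _ => X) hsub hS
    have : cylinder (Finset.Iic a) S = (Finset.Iic (max a L)).restrict (π := fun _ => X) ⁻¹'
        (Finset.restrict₂ (π := fun _ => X) hsub ⁻¹' S) := by
      rw [← Set.preimage_comp, Finset.restrict₂_comp_restrict]
      rfl
    rw [this, ← Measure.map_apply (Finset.measurable_restrict _) hS',
      ← Measure.map_apply (Finset.measurable_restrict _) hS',
      map_restrict_Iic_eq (h _ (le_max_right _ _))]
  refine ext_of_generate_finite _ generateFrom_measurableCylinders.symm
    isPiSystem_measurableCylinders (fun s hs => ?_) ?_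
  · rw [measurableCylinders_nat] at hs
    simp only [Set.mem_iUnion, Set.mem_singleton_iff] at hs
    obtain ⟨a, S, hS, rfl⟩ := hs
    exact hcyl a S hS
  · simpa using hcyl 0 Set.univ MeasurableSet.univ

theorem ext_of_pathCylinder_prod {μ ν : Measure ((ℕ → X) × (ℕ → X))} [IsFiniteMeasure μ]
    (L : ℕ) (h : ∀ N ≥ L, ∀ u v, μ (pathCylinder N u ×ˢ pathCylinder N v) =
      ν (pathCylinder N u ×ˢ pathCylinder N v)) : μ = ν := by
  let e := MeasurableEquiv.arrowProdEquivProdArrow X X ℕ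
  have : μ.map e.symm = ν.map e.symm := by
    refine ext_of_pathCylinder L fun N hN w => ?_
    have : e.symm ⁻¹' pathCylinder N w =
        pathCylinder N (fun i => (w i).1) ×ˢ pathCylinder N (fun i => (w i).2) := by
      ext ⟨p, r⟩
      simp [e, pathCylinder, MeasurableEquiv.arrowProdEquivProdArrow,
        Equiv.arrowProdEquivProdArrow, Prod.ext_iff, forall_and]
    rw [e.symm.map_apply, e.symm.map_apply, this, h N hN]
  simpa using congrArg (Measure.map e) this

end PathCylinder

section TailSwap

variable {X : Type*}

def splice (u v : ℕ → X) (m n : ℕ) : ℕ → X := fun i => if i ≤ m then u i else v (n + (i - m))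

open scoped Classical in
/-- Being the identity off the meeting event `w.1 m = w.2 n` lets this preserve the law of two
independent chains on the whole pair space. -/
noncomputable def tailSwap (m n : ℕ) (w : (ℕ → X) × (ℕ → X)) : (ℕ → X) × (ℕ → X) :=
  if w.1 m = w.2 n then (splice w.1 w.2 m n, splice w.2 w.1 n m) else w

variable {u v ω : ℕ → X} {m n N : ℕ}

lemma splice_of_le {i : ℕ} (h : i ≤ m) : splice u v m n i = u i := if_pos h

lemma splice_of_lt {i : ℕ} (h : m < i) : splice u v m n i = v (n + (i - m)) := if_neg (by omega)

lemma pathDrop_splice (h : u m = v n) : pathDrop m (splice u v m n) = pathDrop n v := by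
  ext (_ | k)
  · simpa [pathDrop, splice_of_le] using h
  · simp [pathDrop, splice_of_lt]

lemma pathCylinder_splice : pathCylinder m (splice u v m n) = pathCylinder m u := by
  ext ω
  simp +contextual [pathCylinder, splice_of_le]

lemma splice_mem_pathCylinder : splice u v m n ∈ pathCylinder m ω ↔ u ∈ pathCylinder m ω := by
  simp +contextual [pathCylinder, splice_of_le]

lemma tailSwap_preimage_of_eq (huv : u m = v n) (hm : m ≤ N) (hn : n ≤ N) :
    tailSwap m n ⁻¹' (pathCylinder N u ×ˢ pathCylinder N v) =
      pathCylinder (m + (N - n)) (splice u v m n) ×ˢ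
        pathCylinder (n + (N - m)) (splice v u n m) := by
  ext ⟨p, r⟩
  simp only [Set.mem_preimage, Set.mem_prod, tailSwap]
  split_ifs with hpr <;> dsimp only
  · rw [mem_pathCylinder_add_iff, mem_pathCylinder_add_iff, pathCylinder_splice,
      pathCylinder_splice, pathDrop_splice huv, pathDrop_splice huv.symm,
      mem_pathCylinder_iff_of_le hm, mem_pathCylinder_iff_of_le hn, splice_mem_pathCylinder,
      splice_mem_pathCylinder, pathDrop_splice hpr, pathDrop_splice hpr.symm]
    tauto
  · refine iff_of_false (fun ⟨hp, hr⟩ => hpr ?_) (fun ⟨hp, hr⟩ => hpr ?_)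
    · rw [hp m hm, hr n hn, huv]
    · rw [hp m (by omega), hr n (by omega), splice_of_le le_rfl, splice_of_le le_rfl, huv]

lemma tailSwap_preimage_of_ne (huv : u m ≠ v n) (hm : m ≤ N) (hn : n ≤ N) :
    tailSwap m n ⁻¹' (pathCylinder N u ×ˢ pathCylinder N v) =
      pathCylinder N u ×ˢ pathCylinder N v := by
  ext ⟨p, r⟩
  simp only [Set.mem_preimage, Set.mem_prod, tailSwap]
  split_ifs with hpr <;> dsimp only
  · refine iff_of_false (fun ⟨hp, hr⟩ => huv ?_) (fun ⟨hp, hr⟩ => huv ?_)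
    · rw [← hp m hm, ← hr n hn, splice_of_le le_rfl, splice_of_le le_rfl, hpr]
    · rw [← hp m hm, ← hr n hn, hpr]
  · rfl

variable [MeasurableSpace X]

lemma measurable_splice (m n : ℕ) :
    Measurable fun w : (ℕ → X) × (ℕ → X) => splice w.1 w.2 m n :=
  measurable_pi_lambda _ fun i => by
    by_cases h : i ≤ m
    · simp only [splice_of_le h]
      fun_prop
    · simp only [splice_of_lt (not_le.1 h)]
      fun_prop

lemma measurable_tailSwap [MeasurableSingletonClass X] [Countable X] (m n : ℕ) :
    Measurable (tailSwap (X := X) m n) :=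
  Measurable.ite (measurableSet_setOfPred.2 (by fun_prop))
    ((measurable_splice m n).prodMk ((measurable_splice n m).comp measurable_swap)) measurable_id

end TailSwap

section PathLaw

variable [MeasurableSpace G]

noncomputable def pathWeight (K : G → Measure G) (u : ℕ → G) (N : ℕ) : ℝ≥0∞ :=
  ∏ i ∈ Finset.range N, K (u i) {u (i + 1)}

lemma pathWeight_add (K : G → Measure G) (u : ℕ → G) (m k : ℕ) :
    pathWeight K u (m + k) = pathWeight K u m * pathWeight K (pathDrop m u) k := by
  simp only [pathWeight, pathDrop, Finset.prod_range_add, add_assoc]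

lemma pathWeight_eq_of_le (K : G → Measure G) (u : ℕ → G) {m N : ℕ} (h : m ≤ N) :
    pathWeight K u N = pathWeight K u m * pathWeight K (pathDrop m u) (N - m) := by
  rw [← pathWeight_add, Nat.add_sub_cancel' h]

lemma pathWeight_splice (K : G → Measure G) {u v : ℕ → G} {m n : ℕ} (h : u m = v n) (k : ℕ) :
    pathWeight K (splice u v m n) (m + k) = pathWeight K u m * pathWeight K (pathDrop n v) k := by
  rw [pathWeight_add, pathDrop_splice h]
  congr 1
  refine Finset.prod_congr rfl fun i hi => ?_
  rw [Finset.mem_range] at hi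
  rw [splice_of_le hi.le, splice_of_le hi]

variable [MeasurableSingletonClass G] {K : G → Measure G}

section SingleLaw

variable {z : G} {P : Measure (ℕ → G)} [IsProbabilityMeasure P]

lemma IsPathLaw.ae_start (hP : IsPathLaw K z P) : ∀ᵐ ω ∂P, ω 0 = z := by
  have h : P {ω | ω 0 = z} = 1 := by simpa [pathCylinder_zero] using hP 0 (fun _ => z) rfl
  rwa [ae_iff, ← Set.compl_ofPred,
    prob_compl_eq_zero_iff (measurableSet_setOfPred.2 (by fun_prop))]

open Classical in
lemma IsPathLaw.measure_pathCylinder (hP : IsPathLaw K z P) (N : ℕ) (u : ℕ → G) :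
    P (pathCylinder N u) = if u 0 = z then pathWeight K u N else 0 := by
  split_ifs with hu
  · exact hP N u hu
  · have h₀ : P {ω | ω 0 = z}ᶜ = 0 := hP.ae_start
    have hsub : pathCylinder N u ⊆ {ω | ω 0 = z}ᶜ := fun ω hω h =>
      hu (by rwa [← hω 0 (Nat.zero_le N)])
    exact measure_mono_null hsub h₀

end SingleLaw

variable [Countable G] {P : G → Measure (ℕ → G)} [∀ a, IsProbabilityMeasure (P a)]

theorem IsPathLaw.map_pathDrop_one (hP : ∀ a, IsPathLaw K a (P a)) (z : G) :
    (P z).map (pathDrop 1) = Measure.sum fun a => K z {a} • P a := by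
  refine ext_of_pathCylinder 0 fun N _ u => ?_
  let u' : ℕ → G := fun i => if i = 0 then z else u (i - 1)
  have hpre : pathDrop 1 ⁻¹' pathCylinder N u ∩ {ω | ω 0 = z} = pathCylinder (1 + N) u' := by
    ext ω
    simp only [Set.mem_inter_iff, Set.mem_preimage, pathCylinder, pathDrop, Set.mem_ofPred_eq, u']
    constructor
    · rintro ⟨h, h₀⟩ (_ | i) hi
      · simpa using h₀
      · simpa [add_comm 1 i] using h i (by omega)
    · intro h
      exact ⟨fun i hi => by simpa [add_comm 1 i] using h (i + 1) (by omega),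
        by simpa using h 0 (by omega)⟩
  have h₀ : P z {ω | ω 0 = z}ᶜ = 0 := (hP z).ae_start
  have hu' : pathDrop 1 u' = u := funext fun k => by simp [u', pathDrop]
  rw [Measure.map_apply (measurable_pathDrop 1) (measurableSet_pathCylinder N u),
    Measure.sum_apply _ (measurableSet_pathCylinder N u), ← measure_inter_conull h₀, hpre,
    (hP z).measure_pathCylinder, if_pos (by simp [u']), pathWeight_add, hu']
  simp only [Measure.smul_apply, smul_eq_mul, (hP _).measure_pathCylinder, mul_ite, mul_zero]
  rw [tsum_eq_single (u 0) fun a ha => if_neg (Ne.symm ha), if_pos rfl]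
  simp [pathWeight, u']

theorem IsPathLaw.measure_pathDrop_one_preimage (hP : ∀ a, IsPathLaw K a (P a)) (z : G)
    {S : Set (ℕ → G)} (hS : MeasurableSet S) :
    P z (pathDrop 1 ⁻¹' S) = ∑' a, K z {a} * P a S := by
  rw [← Measure.map_apply (measurable_pathDrop 1) hS, map_pathDrop_one hP, Measure.sum_apply _ hS]
  simp only [Measure.smul_apply, smul_eq_mul]

theorem IsPathLaw.measure_coord_eq_nStep (hP : ∀ a, IsPathLaw K a (P a)) (M : ℕ) (z b : G) :
    P z {ω | ω M = b} = nStep K M z {b} := by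
  induction M generalizing z with
  | zero =>
    rw [← pathCylinder_zero, (hP z).measure_pathCylinder, nStep,
      Measure.dirac_apply' _ (measurableSet_singleton b)]
    by_cases hb : b = z <;> simp [pathWeight, hb, Ne.symm]
  | succ M ih =>
    have : {ω : ℕ → G | ω (M + 1) = b} = pathDrop 1 ⁻¹' {ω | ω M = b} := by
      ext
      simp [pathDrop, add_comm]
    rw [this, measure_pathDrop_one_preimage hP z (measurableSet_setOfPred.2 (by fun_prop)),
      nStep, Measure.sum_apply _ (measurableSet_singleton b)]
    simp only [Measure.smul_apply, smul_eq_mul, ih]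

theorem IsPathLaw.measure_revisit_eq_zero (hP : ∀ a, IsPathLaw K a (P a)) (hcf : CycleFree K)
    {i j : ℕ} (hij : i < j) (z : G) : P z {ω | ω i = ω j} = 0 := by
  induction i generalizing z j with
  | zero =>
    have h₀ : P z {ω | ω 0 = z}ᶜ = 0 := (hP z).ae_start
    rw [← measure_inter_conull h₀]
    refine measure_mono_null (t := {ω | ω j = z}) (fun ω ⟨h, hz⟩ => ?_) ?_
    · simp only [Set.mem_ofPred_eq] at h hz ⊢
      rw [← h, hz]
    · rw [measure_coord_eq_nStep hP, hcf z j hij]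
  | succ i ih =>
    obtain ⟨j, rfl⟩ : ∃ j', j = j' + 1 := ⟨j - 1, by omega⟩
    have : {ω : ℕ → G | ω (i + 1) = ω (j + 1)} = pathDrop 1 ⁻¹' {ω | ω i = ω j} := by
      ext
      simp [pathDrop, add_comm]
    rw [this, measure_pathDrop_one_preimage hP z (measurableSet_setOfPred.2 (by fun_prop))]
    simp [ih (show i < j by omega)]

theorem IsPathLaw.ae_injective (hP : ∀ a, IsPathLaw K a (P a)) (hcf : CycleFree K) (z : G) :
    ∀ᵐ ω ∂P z, Function.Injective ω := by
  have h : ∀ i j, ∀ᵐ ω ∂P z, i < j → ω i ≠ ω j := by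
    intro i j
    by_cases hij : i < j
    · have hne : ∀ᵐ ω ∂P z, ω i ≠ ω j :=
        ae_iff.2 (by simpa using measure_revisit_eq_zero hP hcf hij z)
      filter_upwards [hne] with ω hω using fun _ => hω
    · exact ae_of_all _ fun _ h => absurd h hij
  filter_upwards [ae_all_iff.2 fun i => ae_all_iff.2 (h i)] with ω hω i j hij
  by_contra hne
  rcases lt_or_gt_of_ne hne with hlt | hlt
  · exact hω i j hlt hij
  · exact hω j i hlt hij.symm

theorem IsPathLaw.map_tailSwap (hP : ∀ a, IsPathLaw K a (P a)) (z₁ z₂ : G) (m n : ℕ) :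
    ((P z₁).prod (P z₂)).map (tailSwap m n) = (P z₁).prod (P z₂) := by
  refine (ext_of_pathCylinder_prod (max m n) fun N hN u v => ?_).symm
  have hm : m ≤ N := le_of_max_le_left hN
  have hn : n ≤ N := le_of_max_le_right hN
  rw [Measure.map_apply (measurable_tailSwap m n)
    ((measurableSet_pathCylinder N u).prod (measurableSet_pathCylinder N v))]
  by_cases huv : u m = v n
  · rw [tailSwap_preimage_of_eq huv hm hn, Measure.prod_prod, Measure.prod_prod,
      (hP z₁).measure_pathCylinder, (hP z₂).measure_pathCylinder, (hP z₁).measure_pathCylinder,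
      (hP z₂).measure_pathCylinder, splice_of_le (Nat.zero_le m), splice_of_le (Nat.zero_le n)]
    split_ifs
    · rw [pathWeight_splice K huv, pathWeight_splice K huv.symm, pathWeight_eq_of_le K u hm,
        pathWeight_eq_of_le K v hn]
      ring
    all_goals simp
  · rw [tailSwap_preimage_of_ne huv hm hn]

end PathLaw

section FirstHit

variable {X : Type*} {p q r : ℕ → X} {m n : ℕ}

lemma collisions_eq_empty_iff : collisions p q = ∅ ↔ ∀ i j, 1 ≤ i → 1 ≤ j → p i ≠ q j := by
  simp [collisions, Set.eq_empty_iff_forall_notMem]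

lemma collisions_eq_empty_comm : collisions p q = ∅ ↔ collisions q p = ∅ := by
  simp only [collisions_eq_empty_iff]
  exact ⟨fun h i j hi hj e => h j i hj hi e.symm, fun h i j hi hj e => h j i hj hi e.symm⟩

def FirstHit (p q r : ℕ → X) (m n : ℕ) : Prop :=
  IsLeast {k | 1 ≤ k ∧ ∃ i, 1 ≤ i ∧ (p i = r k ∨ q i = r k)} n ∧
    IsLeast {i | 1 ≤ i ∧ p i = r n} m

lemma FirstHit.unique {m' n' : ℕ} (h : FirstHit p q r m n) (h' : FirstHit p q r m' n') :
    m = m' ∧ n = n' := by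
  obtain rfl := h.1.unique h'.1
  exact ⟨h.2.unique h'.2, rfl⟩

lemma exists_firstHit (h : collisions p r ≠ ∅) :
    ∃ m n, FirstHit p q r m n ∨ FirstHit q p r m n := by
  obtain ⟨i, k, hi, hk, hik⟩ : ∃ i k, 1 ≤ i ∧ 1 ≤ k ∧ p i = r k := by
    simpa [collisions_eq_empty_iff] using h
  have hn := isLeast_csInf (s := {k | 1 ≤ k ∧ ∃ i, 1 ≤ i ∧ (p i = r k ∨ q i = r k)})
    ⟨k, hk, i, hi, Or.inl hik⟩
  obtain ⟨-, j, hj, hjp | hjq⟩ := hn.1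
  · exact ⟨_, _, Or.inl ⟨hn, isLeast_csInf ⟨j, hj, hjp⟩⟩⟩
  · exact ⟨_, _, Or.inr ⟨by simpa only [or_comm] using hn, isLeast_csInf ⟨j, hj, hjq⟩⟩⟩

variable (h : FirstHit p q r m n)
include h

/-- Injectivity of `r` rules out a meeting of the old head of `r` with the new tail of `p`,
which is a piece of `r` from later times. -/
lemma FirstHit.swapTails (hr : Function.Injective r) :
    FirstHit (splice p r m n) q (splice r p n m) m n := by
  obtain ⟨⟨hn, -⟩, hnmin⟩ := h.1
  obtain ⟨⟨hm, hmn⟩, hmmin⟩ := h.2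
  have hr' : splice r p n m n = r n := splice_of_le le_rfl
  refine ⟨⟨⟨hn, m, hm, Or.inl ?_⟩, ?_⟩, ⟨⟨hm, ?_⟩, ?_⟩⟩
  · rw [splice_of_le le_rfl, hr', hmn]
  · rintro k ⟨hk, i, hi, hik⟩
    by_contra! hkn
    rw [splice_of_le hkn.le] at hik
    rcases hik with hik | hik
    · rcases le_or_gt i m with him | him
      · rw [splice_of_le him] at hik
        exact absurd (hnmin ⟨hk, i, hi, Or.inl hik⟩) (not_le.2 hkn)
      · rw [splice_of_lt him] at hik
        have := hr hik
        omega
    · exact absurd (hnmin ⟨hk, i, hi, Or.inr hik⟩) (not_le.2 hkn)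
  · rw [splice_of_le le_rfl, hr', hmn]
  · rintro i ⟨hi, hin⟩
    by_contra! him
    rw [splice_of_le him.le, hr'] at hin
    exact absurd (hmmin ⟨hi, hin⟩) (not_le.2 him)

variable (hqp : collisions q p = ∅)
include hqp

lemma FirstHit.collisions_splice_eq_empty : collisions q (splice r p n m) = ∅ := by
  rw [collisions_eq_empty_iff] at hqp ⊢
  intro a b ha hb hab
  rcases le_or_gt b n with hbn | hbn
  · rw [splice_of_le hbn] at hab
    rcases hbn.lt_or_eq with hbn | rfl
    · exact absurd (h.1.2 ⟨hb, a, ha, Or.inr hab⟩) (not_le.2 hbn)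
    · exact hqp a m ha h.2.1.1 (hab.trans h.2.1.2.symm)
  · rw [splice_of_lt hbn] at hab
    exact hqp a _ ha (by omega) hab

lemma FirstHit.collisions_splice_ne_empty (hqr : collisions q r ≠ ∅) :
    collisions q (splice p r m n) ≠ ∅ := by
  rw [collisions_eq_empty_iff] at hqp
  rw [Ne, collisions_eq_empty_iff] at hqr ⊢
  push Not at hqr ⊢
  obtain ⟨a, b, ha, hb, hab⟩ := hqr
  have hnb : n < b := by
    refine lt_of_le_of_ne (h.1.2 ⟨hb, a, ha, Or.inr hab⟩) fun hnb => ?_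
    subst hnb
    exact hqp a m ha h.2.1.1 (hab.trans h.2.1.2.symm)
  refine ⟨a, m + (b - n), ha, by omega, ?_⟩
  rw [splice_of_lt (by omega), hab]
  congr 1
  omega

end FirstHit

section ThreePaths

variable {X : Type*}

def prodLeftComm {α β γ : Type*} (w : α × β × γ) : β × α × γ := (w.2.1, w.1, w.2.2)

lemma measurePreserving_prodLeftComm {α β γ : Type*} [MeasurableSpace α] [MeasurableSpace β]
    [MeasurableSpace γ] (μ₁ : Measure α) (μ₂ : Measure β) (μ₃ : Measure γ) [SFinite μ₁]
    [SFinite μ₂] [SFinite μ₃] :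
    MeasurePreserving prodLeftComm (μ₁.prod (μ₂.prod μ₃)) (μ₂.prod (μ₁.prod μ₃)) :=
  (measurePreserving_prodAssoc μ₂ μ₁ μ₃).comp <|
    (Measure.measurePreserving_swap.prod (MeasurePreserving.id μ₃)).comp
      (measurePreserving_prodAssoc μ₁ μ₂ μ₃).symm

/- A triple is `(q, p, r)`: in the application `q` and `p` are the two chains started at `x`
and `r` is the chain started at `y`. -/
def noCollisions₁₂ : Set ((ℕ → X) × (ℕ → X) × (ℕ → X)) := {w | collisions w.1 w.2.1 = ∅}

def noCollisions₂₃ : Set ((ℕ → X) × (ℕ → X) × (ℕ → X)) := {w | collisions w.2.1 w.2.2 = ∅}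

def noCollisions₁₃ : Set ((ℕ → X) × (ℕ → X) × (ℕ → X)) := {w | collisions w.1 w.2.2 = ∅}

def preSwap (m n : ℕ) : Set ((ℕ → X) × (ℕ → X) × (ℕ → X)) :=
  {w | w ∈ noCollisions₁₂ ∧ w ∉ noCollisions₁₃ ∧ Function.Injective w.2.2 ∧
    FirstHit w.2.1 w.1 w.2.2 m n}

def postSwap (m n : ℕ) : Set ((ℕ → X) × (ℕ → X) × (ℕ → X)) :=
  {w | w ∉ noCollisions₁₂ ∧ w ∈ noCollisions₁₃ ∧ FirstHit w.2.1 w.1 w.2.2 m n}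

lemma mapsTo_tailSwap_preSwap (m n : ℕ) :
    Set.MapsTo (Prod.map id (tailSwap m n)) (preSwap (X := X) m n) (postSwap m n) := by
  rintro w ⟨hqp, hqr, hr, h⟩
  have hswap : tailSwap m n w.2 = (splice w.2.1 w.2.2 m n, splice w.2.2 w.2.1 n m) :=
    if_pos h.2.1.2
  show (w.1, tailSwap m n w.2) ∈ postSwap m n
  rw [hswap]
  exact ⟨h.collisions_splice_ne_empty hqp hqr, h.collisions_splice_eq_empty hqp, h.swapTails hr⟩

lemma pairwise_disjoint_postSwap :
    Pairwise (Function.onFun Disjoint fun k : ℕ × ℕ => postSwap (X := X) k.1 k.2) :=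
  fun _ _ hk => Set.disjoint_left.2 fun _ hw hw' => hk (Prod.ext_iff.2 (hw.2.2.unique hw'.2.2))

lemma subset_iUnion_preSwap :
    noCollisions₁₂ ∩ noCollisions₂₃ᶜ ∩ noCollisions₁₃ᶜ ∩ {w | Function.Injective w.2.2} ⊆
      ⋃ k : ℕ × ℕ, preSwap (X := X) k.1 k.2 ∪ prodLeftComm ⁻¹' preSwap k.1 k.2 := by
  rintro w ⟨⟨⟨hqp, hpr⟩, hqr⟩, hr⟩
  obtain ⟨m, n, h | h⟩ := exists_firstHit (q := w.1) hpr
  · exact Set.mem_iUnion.2 ⟨(m, n), Or.inl ⟨hqp, hqr, hr, h⟩⟩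
  · exact Set.mem_iUnion.2 ⟨(m, n), Or.inr ⟨collisions_eq_empty_comm.1 hqp, hpr, hr, h⟩⟩

variable [MeasurableSpace X] [MeasurableSingletonClass X] [Countable X]

@[fun_prop]
lemma Measurable.collisions_eq_empty {α : Type*} [MeasurableSpace α] {f g : α → ℕ → X}
    (hf : Measurable f) (hg : Measurable g) : Measurable fun a => collisions (f a) (g a) = ∅ := by
  simp only [collisions_eq_empty_iff]
  fun_prop

@[fun_prop]
lemma Measurable.firstHit {α : Type*} [MeasurableSpace α] {f g h : α → ℕ → X}
    (hf : Measurable f) (hg : Measurable g) (hh : Measurable h) (m n : ℕ) :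
    Measurable fun a => FirstHit (f a) (g a) (h a) m n := by
  simp only [FirstHit, IsLeast, lowerBounds, Set.mem_ofPred_eq]
  fun_prop

lemma measurableSet_noCollisions :
    MeasurableSet {q : (ℕ → X) × (ℕ → X) | collisions q.1 q.2 = ∅} :=
  measurableSet_setOfPred.2 (by fun_prop)

lemma measurableSet_postSwap (m n : ℕ) : MeasurableSet (postSwap (X := X) m n) := by
  simp only [postSwap, noCollisions₁₂, noCollisions₁₃, Set.mem_ofPred_eq]
  exact measurableSet_setOfPred.2 (by fun_prop)

variable {μ ν : Measure (ℕ → X)} [IsProbabilityMeasure μ] [IsProbabilityMeasure ν]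

/-- The factor `2` counts the two ways `r` can first meet the other paths, which are exchanged by
swapping `q` and `p`. -/
theorem measure_noCollisions_diff_le
    (hswap : ∀ m n, (μ.prod ν).map (tailSwap m n) = μ.prod ν)
    (hinj : ∀ᵐ ω ∂ν, Function.Injective ω) :
    (μ.prod (μ.prod ν)) (noCollisions₁₂ ∩ noCollisions₂₃ᶜ ∩ noCollisions₁₃ᶜ) ≤
      2 * (μ.prod (μ.prod ν)) (noCollisions₁₂ᶜ ∩ noCollisions₁₃) := by
  set ρ := μ.prod (μ.prod ν)
  have hσ : MeasurePreserving prodLeftComm ρ ρ := measurePreserving_prodLeftComm μ μ ν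
  have hr : ∀ᵐ w ∂ρ, Function.Injective w.2.2 :=
    Measure.quasiMeasurePreserving_snd.ae (Measure.quasiMeasurePreserving_snd.ae hinj)
  have hpiece : ∀ m n, ρ (preSwap m n ∪ prodLeftComm ⁻¹' preSwap m n) ≤ 2 * ρ (postSwap m n) := by
    intro m n
    have hT : MeasurePreserving (Prod.map id (tailSwap m n)) ρ ρ :=
      (MeasurePreserving.id μ).prod ⟨measurable_tailSwap m n, hswap m n⟩
    have hpre : ρ (preSwap m n) ≤ ρ (postSwap m n) :=
      (measure_mono (mapsTo_tailSwap_preSwap m n)).trans_eq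
        (hT.measure_preimage (measurableSet_postSwap m n).nullMeasurableSet)
    have hσpre : ρ (prodLeftComm ⁻¹' preSwap m n) ≤ ρ (preSwap m n) :=
      (Measure.le_map_apply hσ.measurable.aemeasurable _).trans_eq (by rw [hσ.map_eq])
    calc _ ≤ ρ (preSwap m n) + ρ (prodLeftComm ⁻¹' preSwap m n) := measure_union_le _ _
      _ ≤ ρ (postSwap m n) + ρ (postSwap m n) := add_le_add hpre (hσpre.trans hpre)
      _ = 2 * ρ (postSwap m n) := (two_mul _).symm
  calc _ = ρ (noCollisions₁₂ ∩ noCollisions₂₃ᶜ ∩ noCollisions₁₃ᶜ ∩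
          {w | Function.Injective w.2.2}) := (measure_inter_conull hr).symm
    _ ≤ ∑' k : ℕ × ℕ, ρ (preSwap k.1 k.2 ∪ prodLeftComm ⁻¹' preSwap k.1 k.2) :=
        (measure_mono subset_iUnion_preSwap).trans (measure_iUnion_le _)
    _ ≤ ∑' k : ℕ × ℕ, 2 * ρ (postSwap k.1 k.2) := ENNReal.tsum_le_tsum fun k => hpiece k.1 k.2
    _ = 2 * ρ (⋃ k : ℕ × ℕ, postSwap k.1 k.2) := by
        rw [ENNReal.tsum_mul_left, measure_iUnion pairwise_disjoint_postSwap
          fun k => measurableSet_postSwap k.1 k.2]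
    _ ≤ 2 * ρ (noCollisions₁₂ᶜ ∩ noCollisions₁₃) := by
        gcongr
        exact Set.iUnion_subset fun k w hw => ⟨hw.1, hw.2.1⟩

theorem measure_noCollisions_le_two_mul
    (hswap : ∀ m n, (μ.prod ν).map (tailSwap m n) = μ.prod ν)
    (hinj : ∀ᵐ ω ∂ν, Function.Injective ω) :
    (μ.prod μ) {q | collisions q.1 q.2 = ∅} ≤ 2 * (μ.prod ν) {q | collisions q.1 q.2 = ∅} := by
  set ρ := μ.prod (μ.prod ν)
  have hσ := measurePreserving_prodLeftComm μ μ ν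
  have h₁₂ : MeasurableSet (noCollisions₁₂ (X := X)) := measurableSet_setOfPred.2 (by fun_prop)
  have h₂₃ : MeasurableSet (noCollisions₂₃ (X := X)) := measurableSet_setOfPred.2 (by fun_prop)
  have h₁₃ : MeasurableSet (noCollisions₁₃ (X := X)) := measurableSet_setOfPred.2 (by fun_prop)
  have hρ₁₂ : ρ noCollisions₁₂ = (μ.prod μ) {q | collisions q.1 q.2 = ∅} := by
    rw [show noCollisions₁₂ = Prod.map id Prod.fst ⁻¹' {q : (ℕ → X) × (ℕ → X) |
        collisions q.1 q.2 = ∅} from rfl,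
      ← Measure.map_apply (measurable_id.prodMap measurable_fst) measurableSet_noCollisions,
      ← Measure.map_prod_map _ _ measurable_id measurable_fst, Measure.map_fst_prod,
      Measure.map_id, measure_univ, one_smul]
  have hρ₂₃ : ρ noCollisions₂₃ = (μ.prod ν) {q | collisions q.1 q.2 = ∅} := by
    rw [show noCollisions₂₃ = Set.univ ×ˢ {q : (ℕ → X) × (ℕ → X) | collisions q.1 q.2 = ∅} by
      ext; simp [noCollisions₂₃], Measure.prod_prod, measure_univ, one_mul]
  have hρ₁₃ : ρ noCollisions₁₃ = ρ noCollisions₂₃ := hσ.measure_preimage h₂₃.nullMeasurableSet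
  have hρ' : ρ (noCollisions₁₂ᶜ ∩ noCollisions₂₃) = ρ (noCollisions₁₂ᶜ ∩ noCollisions₁₃) := by
    rw [← hσ.measure_preimage (h₁₂.compl.inter h₁₃).nullMeasurableSet]
    congr 1
    ext w
    simp [prodLeftComm, noCollisions₁₂, noCollisions₂₃, noCollisions₁₃,
      collisions_eq_empty_comm (p := w.1)]
  calc (μ.prod μ) _ = ρ noCollisions₁₂ := hρ₁₂.symm
    _ ≤ ρ (noCollisions₁₂ ∩ noCollisions₂₃) + ρ (noCollisions₁₂ ∩ noCollisions₁₃) +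
        ρ (noCollisions₁₂ ∩ noCollisions₂₃ᶜ ∩ noCollisions₁₃ᶜ) := by
      refine (measure_mono fun w hw => ?_).trans
        ((measure_union_le _ _).trans (by gcongr; exact measure_union_le _ _))
      by_cases h₂₃ : w ∈ noCollisions₂₃ <;> by_cases h₁₃ : w ∈ noCollisions₁₃ <;> simp_all
    _ ≤ ρ (noCollisions₁₂ ∩ noCollisions₂₃) + ρ (noCollisions₁₂ ∩ noCollisions₁₃) +
        2 * ρ (noCollisions₁₂ᶜ ∩ noCollisions₁₃) := by
      gcongr
      exact measure_noCollisions_diff_le hswap hinj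
    _ = (ρ (noCollisions₂₃ ∩ noCollisions₁₂) + ρ (noCollisions₂₃ \ noCollisions₁₂)) +
        (ρ (noCollisions₁₃ ∩ noCollisions₁₂) + ρ (noCollisions₁₃ \ noCollisions₁₂)) := by
      rw [Set.sdiff_eq, Set.sdiff_eq, Set.inter_comm _ noCollisions₁₂ᶜ,
        Set.inter_comm _ noCollisions₁₂ᶜ, hρ', Set.inter_comm noCollisions₂₃,
        Set.inter_comm noCollisions₁₃]
      ring
    _ = 2 * (μ.prod ν) {q | collisions q.1 q.2 = ∅} := by
      rw [measure_inter_add_sdiff _ h₁₂, measure_inter_add_sdiff _ h₁₂, hρ₁₃, hρ₂₃, two_mul]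

end ThreePaths

theorem no_collision_prob_lower_bound_general
    [Countable G] [MeasurableSpace G] [MeasurableSingletonClass G]
    (K : G → Measure G) (hcf : CycleFree K)
    (P : G → Measure (ℕ → G)) [∀ x, IsProbabilityMeasure (P x)]
    (hP : ∀ x, IsPathLaw K x (P x)) (x y : G) :
    ((P x).prod (P x)) {q | collisions q.1 q.2 = ∅} / 3
      ≤ ((P x).prod (P y)) {q | collisions q.1 q.2 = ∅} := by
  have h := measure_noCollisions_le_two_mul (fun m n => IsPathLaw.map_tailSwap hP x y m n)
    (IsPathLaw.ae_injective hP hcf y)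
  refine ENNReal.div_le_of_le_mul (h.trans ?_)
  rw [mul_comm]
  gcongr
  norm_num

/-- For a cycle-free Markov kernel on a countable set, the no-collision
probability satisfies `p(x,y) ≥ p(x,x)/3`. -/
theorem no_collision_prob_lower_bound
    [Countable G] [MeasurableSpace G] [MeasurableSingletonClass G]
    (K : G → Measure G) (hK : ∀ x, IsProbabilityMeasure (K x)) (hcf : CycleFree K)
    (P : G → Measure (ℕ → G)) [∀ x, IsProbabilityMeasure (P x)]
    (hP : ∀ x, IsPathLaw K x (P x)) (x y : G) :
    ((P x).prod (P x)) {q | collisions q.1 q.2 = ∅} / 3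
      ≤ ((P x).prod (P y)) {q | collisions q.1 q.2 = ∅} :=
  no_collision_prob_lower_bound_general K hcf P hP x y

end CMTPaper
end

section
/- Let K be a cycle-free Markov kernel on a countable set G such that for every z ∈ G, two independent Markov chains with kernel K started from z almost surely have a collision (i.e., (ℙ_z ⊗ ℙ_z)({∃ m ≥ 1, n ≥ 1 : X_m = Y_n}) = 1). Then for every z ∈ G, two independent chains started from z almost surely have infinitely many collisions: (ℙ_z ⊗ ℙ_z)-almost surely, the set {(m,n) : m ≥ 1, n ≥ 1, X_m = Y_n} is infinite. -/
/-! By the Markov property at the deterministic times `m` and `n`, conditionally on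
`X_m = Y_n = w` the shifted paths are again two independent chains started from `w`, so they
collide almost surely. Hence, for each `(m, n)`, the event that `(m, n)` is a collision followed
by no later collision `(m + a, n + b)` is null. A finite nonempty collision set has such a last
collision (maximize `m + n`), and countable subadditivity over `(m, n)` concludes.
-/

open MeasureTheory

namespace CMTPaper

variable {G : Type*}

section PathSpace

def shift (m : ℕ) (ω : ℕ → G) : ℕ → G := fun i => ω (m + i)

def cyl (n : ℕ) (u : ℕ → G) : Set (ℕ → G) := {ω | ∀ i ≤ n, ω i = u i}

def glue {m : ℕ} (v : Fin m → G) (u : ℕ → G) : ℕ → G :=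
  fun i => if h : i < m then v ⟨i, h⟩ else u (i - m)

lemma glue_add {m : ℕ} (v : Fin m → G) (u : ℕ → G) (i : ℕ) : glue v u (m + i) = u i := by
  simp [glue]

lemma shift_preimage_cyl_zero (m : ℕ) (u : ℕ → G) :
    shift m ⁻¹' cyl 0 u = {ω | ω m = u 0} := by
  simp [shift, cyl]

lemma shift_preimage_cyl_eq_iUnion (m n : ℕ) (u : ℕ → G) :
    shift m ⁻¹' cyl n u = ⋃ v : Fin m → G, cyl (m + n) (glue v u) := by
  ext ω
  simp only [Set.mem_preimage, Set.mem_iUnion, cyl, shift, Set.mem_ofPred_eq]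
  constructor
  · intro hω
    refine ⟨fun i => ω i, fun i hi => ?_⟩
    by_cases h : i < m
    · simp [glue, h]
    · obtain ⟨k, rfl⟩ := Nat.exists_eq_add_of_le (not_lt.1 h)
      rw [glue_add]
      exact hω k (by omega)
  · rintro ⟨v, hv⟩ i hi
    simpa [glue_add] using hv (m + i) (by omega)

lemma pairwise_disjoint_cyl_glue (m n : ℕ) (u : ℕ → G) :
    Pairwise (Function.onFun Disjoint fun v : Fin m → G => cyl (m + n) (glue v u)) := by
  intro v v' hvv'
  refine Set.disjoint_left.2 fun ω hω hω' => hvv' (funext fun i => ?_)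
  have hi : (i : ℕ) ≤ m + n := by omega
  simpa [glue] using (hω i hi).symm.trans (hω' i hi)

lemma cyl_eq_cyl_of_mem {n : ℕ} {u ω : ℕ → G} (h : ω ∈ cyl n u) : cyl n u = cyl n ω := by
  ext ψ
  simp only [cyl, Set.mem_ofPred_eq]
  exact forall₂_congr fun i hi => by rw [h i hi]

lemma cyl_inter_cyl_self (n n' : ℕ) (ω : ℕ → G) :
    cyl n ω ∩ cyl n' ω = cyl (max n n') ω := by
  ext ψ
  simp only [cyl, Set.mem_inter_iff, Set.mem_ofPred_eq, le_max_iff]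
  exact ⟨fun h i hi => hi.elim (h.1 i) (h.2 i), fun h => ⟨fun i hi => h i (.inl hi),
    fun i hi => h i (.inr hi)⟩⟩

lemma isPiSystem_cyl : IsPiSystem (Set.range fun p : ℕ × (ℕ → G) => cyl p.1 p.2) := by
  rintro _ ⟨⟨n, u⟩, rfl⟩ _ ⟨⟨n', u'⟩, rfl⟩ ⟨ω, hω, hω'⟩
  exact ⟨⟨max n n', ω⟩, by
    dsimp only at hω hω' ⊢
    rw [cyl_eq_cyl_of_mem hω, cyl_eq_cyl_of_mem hω', cyl_inter_cyl_self]⟩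

variable [MeasurableSpace G]

lemma measurable_shift (m : ℕ) : Measurable (shift (G := G) m) :=
  measurable_pi_lambda _ fun i => measurable_pi_apply (m + i)

variable [MeasurableSingletonClass G]

lemma measurableSet_cyl (n : ℕ) (u : ℕ → G) : MeasurableSet (cyl n u) := by
  simp only [cyl, Set.ofPred_forall]
  exact .iInter fun i => .iInter fun _ =>
    (measurableSet_singleton (u i)).preimage (measurable_pi_apply i)

variable [Countable G]

lemma pi_eq_generateFrom_cyl :
    (MeasurableSpace.pi : MeasurableSpace (ℕ → G))
      = MeasurableSpace.generateFrom (Set.range fun p : ℕ × (ℕ → G) => cyl p.1 p.2) := by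
  refine le_antisymm ?_ (MeasurableSpace.generateFrom_le ?_)
  · rw [MeasurableSpace.pi_eq_generateFrom_projections]
    refine MeasurableSpace.generateFrom_le ?_
    rintro _ ⟨j, t, -, rfl⟩
    have hpre : Function.eval j ⁻¹' t
        = ⋃ g ∈ t, ⋃ v : Fin j → G, cyl (j + 0) (glue v fun _ => g) := by
      simp_rw [← shift_preimage_cyl_eq_iUnion, shift_preimage_cyl_zero]
      ext
      simp
    rw [hpre]
    exact .biUnion t.to_countable fun g _ => .iUnion fun v =>
      MeasurableSpace.measurableSet_generateFrom ⟨⟨_, _⟩, rfl⟩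
  · rintro _ ⟨⟨n, u⟩, rfl⟩
    exact measurableSet_cyl n u

lemma measurableSet_collisions_nonempty :
    MeasurableSet {q : (ℕ → G) × (ℕ → G) | (collisions q.1 q.2).Nonempty} := by
  simp only [Set.Nonempty, collisions, Set.mem_ofPred_eq, Set.ofPred_exists]
  exact .iUnion fun p => measurableSet_setOfPred.2 (by fun_prop)

end PathSpace

namespace IsPathLaw

variable [MeasurableSpace G] [MeasurableSingletonClass G] {K : G → Measure G}

section

variable {x : G} {P : Measure (ℕ → G)} [IsProbabilityMeasure P]

lemma measure_cyl_of_ne (hP : IsPathLaw K x P) {n : ℕ} {u : ℕ → G} (hu : u 0 ≠ x) :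
    P (cyl n u) = 0 := by
  have hstart : P (cyl 0 fun _ => x) = 1 := hP 0 _ rfl
  rw [← prob_compl_eq_zero_iff (measurableSet_cyl 0 _)] at hstart
  have hsub : cyl n u ⊆ (cyl 0 fun _ => x)ᶜ := fun ω hω h0 => hu <| by
    rw [← hω 0 (Nat.zero_le n), h0 0 le_rfl]
  exact measure_mono_null hsub hstart

lemma measure_cyl_add (hP : IsPathLaw K x P) (m n : ℕ) (u : ℕ → G) :
    P (cyl (m + n) u) = P (cyl m u) * ∏ i ∈ Finset.range n, K (u (m + i)) {u (m + i + 1)} := by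
  by_cases hu : u 0 = x
  · rw [cyl, hP _ _ hu, cyl, hP _ _ hu, Finset.prod_range_add]
  · simp [hP.measure_cyl_of_ne hu]

variable [Countable G]

lemma measure_shift_preimage_cyl (hP : IsPathLaw K x P) (m n : ℕ) (u : ℕ → G) :
    P (shift m ⁻¹' cyl n u) = P {ω | ω m = u 0} * ∏ i ∈ Finset.range n, K (u i) {u (i + 1)} := by
  have hsum : ∀ k, P (shift m ⁻¹' cyl k u) = ∑' v : Fin m → G, P (cyl (m + k) (glue v u)) :=
    fun k => by
      rw [shift_preimage_cyl_eq_iUnion, measure_iUnion (pairwise_disjoint_cyl_glue m k u)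
        fun v => measurableSet_cyl _ _]
  rw [hsum, ← shift_preimage_cyl_zero, hsum, ← ENNReal.tsum_mul_right]
  refine tsum_congr fun v => ?_
  simp only [hP.measure_cyl_add m n, add_assoc, glue_add, Nat.add_zero]

end

variable [Countable G] {P : G → Measure (ℕ → G)} [∀ x, IsProbabilityMeasure (P x)]

/-- The Markov property at the deterministic time `m`. -/
lemma map_shift_restrict (hP : ∀ x, IsPathLaw K x (P x)) (x z : G) (m : ℕ) :
    ((P x).restrict {ω | ω m = z}).map (shift m) = P x {ω | ω m = z} • P z := by
  refine ext_of_generate_finite _ pi_eq_generateFrom_cyl isPiSystem_cyl ?_ ?_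
  · rintro _ ⟨⟨n, u⟩, rfl⟩
    rw [Measure.map_apply (measurable_shift m) (measurableSet_cyl n u),
      Measure.restrict_apply (measurable_shift m (measurableSet_cyl n u)), Measure.smul_apply,
      smul_eq_mul]
    by_cases hu : u 0 = z
    · have hsub : shift m ⁻¹' cyl n u ⊆ {ω | ω m = z} := fun ω hω => by
        simpa [shift, hu] using hω 0 (Nat.zero_le n)
      rw [Set.inter_eq_self_of_subset_left hsub, (hP x).measure_shift_preimage_cyl, hu]
      exact congrArg _ (hP z n u hu).symm
    · have hdisj : shift m ⁻¹' cyl n u ∩ {ω | ω m = z} = ∅ := by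
        ext ω
        simpa [shift] using fun (hω : ω ∈ shift m ⁻¹' cyl n u) => (hω 0 (Nat.zero_le n)).trans_ne hu
      rw [hdisj, (hP z).measure_cyl_of_ne hu, measure_empty, mul_zero]
  · rw [Measure.map_apply (measurable_shift m) .univ]
    simp

lemma measure_prod_setOf_eq_and_shift_mem_eq_zero (hP : ∀ x, IsPathLaw K x (P x))
    {N : Set ((ℕ → G) × (ℕ → G))} (hN : ∀ w, (P w).prod (P w) N = 0) (x y : G) (m n : ℕ) :
    (P x).prod (P y) {q | q.1 m = q.2 n ∧ (shift m q.1, shift n q.2) ∈ N} = 0 := by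
  set F := Prod.map (shift (G := G) m) (shift n)
  have hcover : {q : (ℕ → G) × (ℕ → G) | q.1 m = q.2 n ∧ F q ∈ N}
      ⊆ ⋃ w, F ⁻¹' N ∩ {ω | ω m = w} ×ˢ {ω | ω n = w} :=
    fun q hq => Set.mem_iUnion.2 ⟨q.1 m, hq.2, rfl, hq.1.symm⟩
  refine measure_mono_null hcover (measure_iUnion_null fun w => ?_)
  have hmeas : ∀ k, MeasurableSet {ω : ℕ → G | ω k = w} := fun k =>
    measurableSet_eq_fun (measurable_pi_apply k) measurable_const
  have hac : (((P x).prod (P y)).restrict ({ω | ω m = w} ×ˢ {ω | ω n = w})).map F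
      ≪ (P w).prod (P w) := by
    rw [← Measure.prod_restrict, ← Measure.map_prod_map _ _ (measurable_shift m)
      (measurable_shift n), map_shift_restrict hP, map_shift_restrict hP]
    exact .prod Measure.smul_absolutelyContinuous Measure.smul_absolutelyContinuous
  rw [← Measure.restrict_apply' ((hmeas m).prod (hmeas n))]
  exact nonpos_iff_eq_zero.1 <| (Measure.le_map_apply
    ((measurable_shift m).prodMap (measurable_shift n)).aemeasurable N).trans (hac (hN w)).le

end IsPathLaw

lemma mem_collisions_of_mem_collisions_shift {ω ω' : ℕ → G} {m n a b : ℕ}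
    (h : (a, b) ∈ collisions (shift m ω) (shift n ω')) : (m + a, n + b) ∈ collisions ω ω' :=
  ⟨by have := h.1; omega, by have := h.2.1; omega, h.2.2⟩

lemma exists_last_collision {ω ω' : ℕ → G} (hfin : (collisions ω ω').Finite)
    (hne : (collisions ω ω').Nonempty) :
    ∃ m n, ω m = ω' n ∧ ¬ (collisions (shift m ω) (shift n ω')).Nonempty := by
  obtain ⟨⟨m, n⟩, ⟨-, -, hmn⟩, hmax⟩ :=
    Set.Finite.exists_maximalFor (fun p : ℕ × ℕ => p.1 + p.2) _ hfin hne
  refine ⟨m, n, hmn, fun ⟨⟨a, b⟩, hab⟩ => ?_⟩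
  have hle := hmax (mem_collisions_of_mem_collisions_shift hab) (by dsimp only; omega)
  have ha : 1 ≤ a := hab.1
  dsimp only at hle
  omega

theorem almost_sure_collision_implies_infinite_collisions_general
    [Countable G] [MeasurableSpace G] [MeasurableSingletonClass G]
    (K : G → Measure G)
    (P : G → Measure (ℕ → G)) [∀ x, IsProbabilityMeasure (P x)]
    (hP : ∀ x, IsPathLaw K x (P x))
    (hcoll : ∀ z : G, ((P z).prod (P z)) {q | (collisions q.1 q.2).Nonempty} = 1) :
    ∀ z : G, ∀ᵐ q ∂((P z).prod (P z)), (collisions q.1 q.2).Infinite := by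
  intro z
  set N := {q : (ℕ → G) × (ℕ → G) | (collisions q.1 q.2).Nonempty}ᶜ
  have hN : ∀ w, (P w).prod (P w) N = 0 := fun w =>
    (prob_compl_eq_zero_iff measurableSet_collisions_nonempty).2 (hcoll w)
  have hcover : {q : (ℕ → G) × (ℕ → G) | ¬ (collisions q.1 q.2).Infinite}
      ⊆ N ∪ ⋃ (m) (n), {q | q.1 m = q.2 n ∧ (shift m q.1, shift n q.2) ∈ N} := by
    intro q hq
    by_cases hne : (collisions q.1 q.2).Nonempty
    · obtain ⟨m, n, hmn, hlast⟩ := exists_last_collision (Set.not_infinite.1 hq) hne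
      exact .inr (Set.mem_iUnion₂.2 ⟨m, n, hmn, hlast⟩)
    · exact .inl hne
  rw [ae_iff]
  exact measure_mono_null hcover <| measure_union_null (hN z) <| measure_iUnion_null fun m =>
    measure_iUnion_null fun n => IsPathLaw.measure_prod_setOf_eq_and_shift_mem_eq_zero hP hN z z m n

/-- If two independent chains from any common starting point a.s. collide,
then they a.s. collide infinitely many times. -/
theorem almost_sure_collision_implies_infinite_collisions
    [Countable G] [MeasurableSpace G] [MeasurableSingletonClass G]
    (K : G → Measure G) (hK : ∀ x, IsProbabilityMeasure (K x)) (hcf : CycleFree K)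
    (P : G → Measure (ℕ → G)) [∀ x, IsProbabilityMeasure (P x)]
    (hP : ∀ x, IsPathLaw K x (P x))
    (hcoll : ∀ z : G, ((P z).prod (P z)) {q | (collisions q.1 q.2).Nonempty} = 1) :
    ∀ z : G, ∀ᵐ q ∂((P z).prod (P z)), (collisions q.1 q.2).Infinite :=
  almost_sure_collision_implies_infinite_collisions_general K P hP hcoll

end CMTPaper
end

section
/- Let Φ be a lattice in ℝ^d and μ a probability measure on Φ such that supp(μ) generates Φ as a group and supp(μ) ⊆ {u : ⟨v,u⟩ > 0} for some v ∈ ℝ^d. Then the following are equivalent: (a) the set D = {d ≥ 1 : ∃ n ≥ 1, ∃ z ∈ Φ with μ^{*n}({z}) > 0 and μ^{*(n+d)}({z}) > 0} is nonempty and the greatest common divisor of its elements is 1 (weak aperiodicity); (b) the subgroup of Φ generated by {u − w : u, w ∈ supp(μ)} is all of Φ. -/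
/-!
Let `H` be the subgroup generated by the differences of support points and `ū` the class in
`Φ ⧸ H` of a support point `u`. The support lies in the coset `u + H`, so every point charged by
`μ^{*n}` maps to `n • ū`. Hence each `k ∈ D` kills `ū`, the gcd condition forces `ū = 0`, and
then `supp μ ⊆ H` gives `H = Φ`. Conversely, if `u ∈ H` then `u = a - b` with `a`, `b` both
charged by some `μ^{*m}`, and `a + u = b + u + u` is charged by both `μ^{*(m+1)}` and
`μ^{*(m+2)}`, so `1 ∈ D`.
-/

open MeasureTheory ENNReal

namespace CMTPaper

/-- The support of a measure on a countable discrete space: points of positive mass. -/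
def suppSet {V : Type*} [MeasurableSpace V] (μ : Measure V) : Set V := {z | μ {z} ≠ 0}

/-- `P` is the law on path space of the random walk `X_n = x + U_1 + ⋯ + U_n` with i.i.d.
increments of law `μ` (characterized by its cylinder probabilities). -/
def IsWalkLaw {V : Type*} [MeasurableSpace V] [AddGroup V] (μ : Measure V) (x : V)
    (P : Measure (ℕ → V)) : Prop :=
  ∀ (n : ℕ) (u : ℕ → V), u 0 = x →
    P {ω | ∀ i ≤ n, ω i = u i} = ∏ i ∈ Finset.range n, μ {u (i + 1) - u i}

-- The `n`-fold convolution power of `μ`, evaluated at singletons: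
-- `μ^{*0}{z} = 1_{z=0}` and `μ^{*(n+1)}{z} = Σ_y μ{y} · μ^{*n}{z - y}`.
open Classical in
noncomputable def convPow {V : Type*} [MeasurableSpace V] [AddGroup V] (μ : Measure V) :
    ℕ → V → ℝ≥0∞
  | 0, z => if z = 0 then 1 else 0
  | n + 1, z => ∑' y : V, μ {y} * convPow μ n (z - y)

/-- The set `D = {d ≥ 1 : ∃ n ≥ 1, ∃ z, μ^{*n}{z} > 0 and μ^{*(n+d)}{z} > 0}` appearing in
the weak aperiodicity condition. -/
def aperSet {V : Type*} [MeasurableSpace V] [AddGroup V] (μ : Measure V) : Set ℕ :=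
  {k | 1 ≤ k ∧ ∃ n : ℕ, 1 ≤ n ∧ ∃ z : V, 0 < convPow μ n z ∧ 0 < convPow μ (n + k) z}

open scoped Pointwise

theorem map_eq_nsmul_of_mem_nsmul {W : Type*} [AddMonoid W] {Q : Type*} [AddMonoid Q]
    (f : W →+ Q) {s : Set W} {c : Q} (hf : ∀ y ∈ s, f y = c) {n : ℕ} {z : W}
    (hz : z ∈ n • s) : f z = n • c := by
  have hs : f '' s ⊆ {c} := by
    rintro _ ⟨y, hy, rfl⟩
    exact hf y hy
  have : f z ∈ n • ({c} : Set Q) :=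
    Set.nsmul_subset_nsmul_left hs (Set.image_nsmul f s n ▸ Set.mem_image_of_mem f hz)
  rwa [Set.nsmul_singleton] at this

theorem exists_mem_nsmul_sub_nsmul_of_mem_closure {V : Type*} [AddCommGroup V] {s : Set V}
    {x : V} (hx : x ∈ AddSubgroup.closure (s - s)) : ∃ m : ℕ, x ∈ m • s - m • s := by
  induction hx using AddSubgroup.closure_induction with
  | mem x hx => exact ⟨1, by rwa [one_nsmul]⟩
  | zero => exact ⟨0, by simp⟩
  | add x y _ _ hx hy =>
    obtain ⟨m, a, ha, b, hb, rfl⟩ := hx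
    obtain ⟨n, a', ha', b', hb', rfl⟩ := hy
    exact ⟨m + n, a + a', by rw [add_nsmul]; exact Set.add_mem_add ha ha',
      b + b', by rw [add_nsmul]; exact Set.add_mem_add hb hb', (sub_add_sub_comm a b a' b').symm⟩
  | neg x _ hx =>
    obtain ⟨m, a, ha, b, hb, rfl⟩ := hx
    exact ⟨m, b, hb, a, ha, (neg_sub a b).symm⟩

section

variable {V : Type*} [MeasurableSpace V] [AddGroup V]

theorem convPow_ne_zero_iff (μ : Measure V) (n : ℕ) (z : V) :
    convPow μ n z ≠ 0 ↔ z ∈ n • suppSet μ := by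
  induction n generalizing z with
  | zero => by_cases hz : z = 0 <;> simp [convPow, hz]
  | succ n ih =>
    rw [convPow, ne_eq, ENNReal.tsum_eq_zero, not_forall, succ_nsmul, Set.mem_add]
    simp only [mul_eq_zero, not_or]
    constructor
    · rintro ⟨y, hy, hzy⟩
      exact ⟨z - y, (ih _).mp hzy, y, hy, sub_add_cancel z y⟩
    · rintro ⟨a, ha, y, hy, rfl⟩
      exact ⟨y, hy, by rw [add_sub_cancel_right]; exact (ih a).mpr ha⟩

theorem suppSet_nonempty_of_closure_eq_top (μ : Measure V) [NeZero μ]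
    (hgen : AddSubgroup.closure (suppSet μ) = ⊤) : (suppSet μ).Nonempty := by
  by_contra hempty
  rw [Set.not_nonempty_iff_eq_empty.mp hempty, AddSubgroup.closure_empty] at hgen
  have hsingle : ({0} : Set V) = Set.univ :=
    Set.eq_univ_of_forall fun x => AddSubgroup.mem_bot.mp (hgen ▸ AddSubgroup.mem_top x)
  exact hempty ⟨0, show μ {0} ≠ 0 by rw [hsingle]; exact NeZero.ne _⟩

theorem addOrderOf_dvd_of_mem_aperSet {μ : Measure V} {Q : Type*} [AddGroup Q] (f : V →+ Q)
    {c : Q} (hf : ∀ y ∈ suppSet μ, f y = c) {k : ℕ} (hk : k ∈ aperSet μ) :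
    addOrderOf c ∣ k := by
  obtain ⟨-, n, -, z, hn, hnk⟩ := hk
  have h₁ := map_eq_nsmul_of_mem_nsmul f hf ((convPow_ne_zero_iff μ n z).mp hn.ne')
  have h₂ := map_eq_nsmul_of_mem_nsmul f hf ((convPow_ne_zero_iff μ (n + k) z).mp hnk.ne')
  rw [h₁, add_nsmul, left_eq_add] at h₂
  exact addOrderOf_dvd_of_nsmul_eq_zero h₂

end

theorem one_mem_aperSet {V : Type*} [MeasurableSpace V] [AddCommGroup V] {μ : Measure V}
    {u : V} (hu : u ∈ suppSet μ) (hdiff : u ∈ AddSubgroup.closure (suppSet μ - suppSet μ)) :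
    1 ∈ aperSet μ := by
  obtain ⟨m, a, ha, b, hb, hab⟩ := exists_mem_nsmul_sub_nsmul_of_mem_closure hdiff
  have hmem : ∀ {n} {z : V}, z ∈ n • suppSet μ → 0 < convPow μ n z := fun hz =>
    pos_iff_ne_zero.mpr ((convPow_ne_zero_iff μ _ _).mpr hz)
  refine ⟨le_rfl, m + 1, by omega, a + u, hmem ?_, hmem ?_⟩
  · rw [succ_nsmul]
    exact Set.add_mem_add ha hu
  · rw [sub_eq_iff_eq_add.mp hab, add_comm u b, succ_nsmul, succ_nsmul]
    exact Set.add_mem_add (Set.add_mem_add hb hu) hu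

theorem weak_aperiodicity_iff_differences_generate_general {d : ℕ} (Φ : AddSubgroup (Fin d → ℝ))
    (μ : Measure Φ) [IsProbabilityMeasure μ]
    (hgen : AddSubgroup.closure (suppSet μ) = ⊤) :
    ((aperSet μ).Nonempty ∧ ∀ m : ℕ, (∀ k ∈ aperSet μ, m ∣ k) → m = 1) ↔
      AddSubgroup.closure
        {w : Φ | ∃ u ∈ suppSet μ, ∃ u' ∈ suppSet μ, w = u - u'} = ⊤ := by
  have hdiff : {w : Φ | ∃ u ∈ suppSet μ, ∃ u' ∈ suppSet μ, w = u - u'} =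
      suppSet μ - suppSet μ := by
    ext w
    simp only [Set.mem_ofPred_eq, Set.mem_sub, eq_comm]
  rw [hdiff]
  obtain ⟨u, hu⟩ := suppSet_nonempty_of_closure_eq_top μ hgen
  constructor
  · rintro ⟨-, hgcd⟩
    let f := QuotientAddGroup.mk' (AddSubgroup.closure (suppSet μ - suppSet μ))
    have hf : ∀ y ∈ suppSet μ, f y = f u := fun y hy =>
      QuotientAddGroup.eq_iff_sub_mem.mpr (AddSubgroup.subset_closure (Set.sub_mem_sub hy hu))
    have hfu : f u = 0 := AddMonoid.addOrderOf_eq_one_iff.mp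
      (hgcd _ fun k hk => addOrderOf_dvd_of_mem_aperSet f hf hk)
    rw [eq_top_iff, ← hgen, AddSubgroup.closure_le]
    exact fun y hy => (QuotientAddGroup.eq_zero_iff y).mp ((hf y hy).trans hfu)
  · intro htop
    have hone := one_mem_aperSet hu (htop ▸ AddSubgroup.mem_top u)
    exact ⟨⟨1, hone⟩, fun m hm => Nat.dvd_one.mp (hm 1 hone)⟩

/-- For a lattice jump distribution whose support generates the lattice and
lies in an open half-space, weak aperiodicity is equivalent to the differences of support
points generating the lattice. -/
theorem weak_aperiodicity_iff_differences_generate {d : ℕ} (Φ : AddSubgroup (Fin d → ℝ))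
    [DiscreteTopology Φ] (μ : Measure Φ) [IsProbabilityMeasure μ]
    (hgen : AddSubgroup.closure (suppSet μ) = ⊤)
    (hhalf : ∃ v : Fin d → ℝ, ∀ u ∈ suppSet μ, 0 < ∑ i, v i * (u : Fin d → ℝ) i) :
    ((aperSet μ).Nonempty ∧ ∀ m : ℕ, (∀ k ∈ aperSet μ, m ∣ k) → m = 1) ↔
      AddSubgroup.closure
        {w : Φ | ∃ u ∈ suppSet μ, ∃ u' ∈ suppSet μ, w = u - u'} = ⊤ :=
  weak_aperiodicity_iff_differences_generate_general Φ μ hgen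

end CMTPaper
end
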